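/- For each i ∈ {1,2,3,4}, the point a_{i+1} = (u_i - 1)/v_i lies in the interval [(cos(π/7)-1)/sin(π/7), (3cos(π/7)-1)/sin(π/7)), where (u₁,v₁) = (2+3cos(2π/7), sin(2π/7)), (u₂,v₂) = (4cos(π/7)+3cos(3π/7), sin(3π/7)), (u₃,v₃) = (4cos(π/7)+cos(3π/7), sin(3π/7)), (u₄,v₄) = (2+cos(2π/7), sin(2π/7)). -/

import Mathlib

open Real

/-!
Write `c = cos (π/7)` and `s = sin (π/7)`. The double- and triple-angle formulas turn
`sin (2π/7)` and `sin (3π/7)` into `s · 2c` and `s · (4c² - 1)`, so after clearing the common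
positive factor `s` each membership becomes a pair of polynomial inequalities in `c`. All of them
factor into the signs of `c + 1`, `2c - 1`, `2c² - 1` and `1 - c`, which hold because
`π/7 < π/4`.
-/

lemma div_mul_mem_Ico_div_iff {s d p a b : ℝ} (hs : 0 < s) (hd : 0 < d) :
    p / (s * d) ∈ Set.Ico (a / s) (b / s) ↔ a * d ≤ p ∧ p < b * d := by
  rw [mul_comm, ← div_div, Set.mem_Ico, div_le_div_iff_of_pos_right hs,
    div_lt_div_iff_of_pos_right hs, le_div_iff₀ hd, div_lt_iff₀ hd]

lemma sin_three_mul_eq_sin_mul (x : ℝ) : sin (3 * x) = sin x * (4 * cos x ^ 2 - 1) := by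
  rw [sin_three_mul]
  linear_combination (-4 * sin x) * sin_sq_add_cos_sq x

lemma one_lt_two_mul_cos_pi_div_seven_sq : 1 < 2 * cos (π / 7) ^ 2 := by
  have h : 0 < cos (2 * (π / 7)) :=
    cos_pos_of_mem_Ioo ⟨by linarith [pi_pos], by linarith [pi_pos]⟩
  linarith [cos_two_mul (π / 7)]

lemma cos_pi_div_seven_lt_one : cos (π / 7) < 1 := by
  simpa using cos_lt_cos_of_nonneg_of_le_pi le_rfl (by linarith [pi_pos]) (by positivity)

/-- The left endpoints `(uᵢ - 1)/vᵢ` of the candidacy intervals of the winning vectors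
of the double heptagon all lie in the top edge
`A = [(cos(π/7)-1)/sin(π/7), (3cos(π/7)-1)/sin(π/7))`. -/
theorem left_endpoints_in_A :
    ((2 + 3 * cos (2 * π / 7)) - 1) / sin (2 * π / 7)
      ∈ Set.Ico ((cos (π / 7) - 1) / sin (π / 7)) ((3 * cos (π / 7) - 1) / sin (π / 7)) ∧
    ((4 * cos (π / 7) + 3 * cos (3 * π / 7)) - 1) / sin (3 * π / 7)
      ∈ Set.Ico ((cos (π / 7) - 1) / sin (π / 7)) ((3 * cos (π / 7) - 1) / sin (π / 7)) ∧
    ((4 * cos (π / 7) + cos (3 * π / 7)) - 1) / sin (3 * π / 7)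
      ∈ Set.Ico ((cos (π / 7) - 1) / sin (π / 7)) ((3 * cos (π / 7) - 1) / sin (π / 7)) ∧
    ((2 + cos (2 * π / 7)) - 1) / sin (2 * π / 7)
      ∈ Set.Ico ((cos (π / 7) - 1) / sin (π / 7)) ((3 * cos (π / 7) - 1) / sin (π / 7)) := by
  have h2 : 2 * π / 7 = 2 * (π / 7) := by ring
  have h3 : 3 * π / 7 = 3 * (π / 7) := by ring
  have hsin2 : sin (2 * (π / 7)) = sin (π / 7) * (2 * cos (π / 7)) := by rw [sin_two_mul]; ring
  rw [h2, h3, hsin2, cos_two_mul, sin_three_mul_eq_sin_mul, cos_three_mul]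
  have hs : 0 < sin (π / 7) := sin_pos_of_pos_of_lt_pi (by positivity) (by linarith [pi_pos])
  have hc0 : 0 < cos (π / 7) := cos_pos_of_mem_Ioo ⟨by linarith [pi_pos], by linarith [pi_pos]⟩
  have hc1 := cos_pi_div_seven_lt_one
  have hc2 := one_lt_two_mul_cos_pi_div_seven_sq
  set c := cos (π / 7)
  have hc_half : 1 / 2 < c := by nlinarith
  have h2c : 0 < 2 * c := by positivity
  have h4c : 0 < 4 * c ^ 2 - 1 := by linarith
  refine ⟨(div_mul_mem_Ico_div_iff hs h2c).2 ⟨?_, ?_⟩, (div_mul_mem_Ico_div_iff hs h4c).2 ⟨?_, ?_⟩,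
    (div_mul_mem_Ico_div_iff hs h4c).2 ⟨?_, ?_⟩, (div_mul_mem_Ico_div_iff hs h2c).2 ⟨?_, ?_⟩⟩
  all_goals nlinarith
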